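/- arXiv:2503.17759 — 4 statements merged into one kernel-verified Lean document; each statement's English description precedes it below -/
import Mathlib

section
/- Let a, b > 0 be real numbers and let m, n ≥ 1 be natural numbers. Then for every natural number t with 0 ≤ t ≤ m + n, the coefficient of z^t in the real polynomial (1 + a·z)^m · (1 + b·z)^n is at most the coefficient of z^t in (1 + ((a·m + b·n)/(m + n))·z)^{m+n}; equivalently, ∑_{x=0}^{t} C(m, x)·C(n, t−x)·a^x·b^{t−x} ≤ C(m+n, t)·((a·m + b·n)/(m + n))^t. -/
/-!
Adjoining a factor `1 + b z` to `(1 + c z)^N` and then replacing all `N + 1` parameters by their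
mean `(c N + b)/(N + 1)` can only increase each coefficient: with `d = (b - c)/(N + 1)`, Pascal's
rule and `(N + 1) C(N, k) = (k + 1) C(N + 1, k + 1)` turn the comparison of the coefficients of
`z^(k+1)` into `c^k (c + (k + 1) d) ≤ (c + d)^(k + 1)`, the tangent-line bound for `y ↦ y^(k+1)`.
Coefficientwise inequalities are preserved by multiplication by `1 + b z`, whose coefficients are
nonnegative, so induction on `n` gives the claim.
-/

open Polynomial

theorem Polynomial.coeff_one_add_C_mul_X_pow {R : Type*} [CommSemiring R] (a : R) (m k : ℕ) :
    ((1 + C a * X) ^ m).coeff k = m.choose k * a ^ k := by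
  rw [show (1 + C a * X) ^ m = ((1 + X) ^ m).comp (C a * X) by simp [pow_comp],
    comp_C_mul_X_coeff, coeff_one_add_X_pow]

theorem Polynomial.coeff_mul_le_coeff_mul_of_nonneg {R : Type*} [Semiring R] [PartialOrder R]
    [IsOrderedRing R] {p q r : R[X]} (hpq : ∀ k, p.coeff k ≤ q.coeff k) (hr : ∀ k, 0 ≤ r.coeff k)
    (k : ℕ) : (p * r).coeff k ≤ (q * r).coeff k := by
  simp only [coeff_mul]
  exact Finset.sum_le_sum fun ij _ ↦ mul_le_mul_of_nonneg_right (hpq ij.1) (hr ij.2)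

theorem pow_mul_add_le_add_pow {R : Type*} [CommRing R] [LinearOrder R] [IsStrictOrderedRing R]
    {a d : R} (ha : 0 ≤ a) (had : 0 ≤ a + d) (k : ℕ) :
    a ^ k * (a + (k + 1) * d) ≤ (a + d) ^ (k + 1) := by
  induction k with
  | zero => simp
  | succ k ih =>
    calc a ^ (k + 1) * (a + (↑(k + 1) + 1) * d)
        ≤ a ^ k * (a * (a + (k + 2) * d) + (k + 1) * d ^ 2) := by
          push_cast
          have : 0 ≤ a ^ k * ((k + 1) * d ^ 2) := by positivity
          linear_combination this
      _ = (a + d) * (a ^ k * (a + (k + 1) * d)) := by ring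
      _ ≤ (a + d) * (a + d) ^ (k + 1) := mul_le_mul_of_nonneg_left ih had
      _ = (a + d) ^ (k + 1 + 1) := by ring

section

variable {R : Type*} [Field R] [LinearOrder R] [IsStrictOrderedRing R] {a b : R}

theorem choose_mul_pow_add_le (ha : 0 ≤ a) (hb : 0 ≤ b) (m k : ℕ) :
    (m.choose (k + 1) : R) * a ^ (k + 1) + m.choose k * a ^ k * b
      ≤ (m + 1).choose (k + 1) * ((a * m + b) / (m + 1)) ^ (k + 1) := by
  set d := (b - a) / (m + 1) with hd_def
  have hd : ((m : R) + 1) * d = b - a := by rw [hd_def]; field_simp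
  have hc : (a * m + b) / (m + 1) = a + d := by rw [hd_def]; field_simp; ring
  have hpascal : ((m + 1).choose (k + 1) : R) = m.choose k + m.choose (k + 1) := by
    exact_mod_cast Nat.choose_succ_succ' m k
  have habsorb : ((m : R) + 1) * m.choose k = (m + 1).choose (k + 1) * (k + 1) := by
    exact_mod_cast Nat.add_one_mul_choose_eq m k
  have hlhs : (m.choose (k + 1) : R) * a ^ (k + 1) + m.choose k * a ^ k * b
      = (m + 1).choose (k + 1) * (a ^ k * (a + (k + 1) * d)) := by
    linear_combination -a ^ (k + 1) * hpascal + (a ^ k * d) * habsorb - (m.choose k * a ^ k) * hd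
  rw [hlhs, hc]
  gcongr
  exact pow_mul_add_le_add_pow ha (hc ▸ by positivity) k

theorem Polynomial.coeff_one_add_C_mul_X_pow_mul_le (ha : 0 ≤ a) (hb : 0 ≤ b) (m k : ℕ) :
    ((1 + C a * X) ^ m * (1 + C b * X)).coeff k
      ≤ ((1 + C ((a * m + b) / (m + 1)) * X) ^ (m + 1)).coeff k := by
  rcases k with _ | k
  · simp [coeff_one_add_C_mul_X_pow]
  · rw [mul_add, mul_one, ← mul_assoc, coeff_add, coeff_mul_X, coeff_mul_C,
      coeff_one_add_C_mul_X_pow, coeff_one_add_C_mul_X_pow, coeff_one_add_C_mul_X_pow]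
    exact choose_mul_pow_add_le ha hb m k

theorem Polynomial.coeff_one_add_C_mul_X_pow_mul_pow_le (ha : 0 ≤ a) (hb : 0 ≤ b) (m n k : ℕ) :
    ((1 + C a * X) ^ m * (1 + C b * X) ^ n).coeff k
      ≤ ((1 + C ((a * m + b * n) / (m + n)) * X) ^ (m + n)).coeff k := by
  induction n generalizing k with
  | zero =>
    rcases eq_or_ne m 0 with rfl | hm
    · simp
    · simp [hm]
  | succ n ih =>
    set c := (a * m + b * n) / (m + n)
    have hc : 0 ≤ c := by positivity
    -- `x / 0 = 0` makes this hold also when `m = n = 0`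
    have hcmn : c * ((m + n : ℕ) : R) = a * m + b * n := by
      rcases Nat.eq_zero_or_pos (m + n) with h | h
      · obtain ⟨rfl, rfl⟩ : m = 0 ∧ n = 0 := by omega
        simp
      · rw [Nat.cast_add]
        exact div_mul_cancel₀ _ (by exact_mod_cast h.ne')
    have hmean : (c * ((m + n : ℕ) : R) + b) / (((m + n : ℕ) : R) + 1)
        = (a * m + b * ((n + 1 : ℕ) : R)) / (m + ((n + 1 : ℕ) : R)) := by
      rw [hcmn]; push_cast; ring_nf
    have hb' : ∀ j, 0 ≤ (1 + C b * X).coeff j := fun j ↦ by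
      rw [← pow_one (1 + C b * X), coeff_one_add_C_mul_X_pow]
      positivity
    rw [pow_succ, ← mul_assoc]
    exact (coeff_mul_le_coeff_mul_of_nonneg ih hb' k).trans
      (hmean ▸ coeff_one_add_C_mul_X_pow_mul_le hc hb (m + n) k)

end

theorem coeff_prod_le_coeff_avg_general (a b : ℝ) (ha : 0 < a) (hb : 0 < b)
    (m n : ℕ) (t : ℕ) :
    ∑ x ∈ Finset.range (t + 1),
        (m.choose x : ℝ) * (n.choose (t - x) : ℝ) * a ^ x * b ^ (t - x)
      ≤ ((m + n).choose t : ℝ) * ((a * m + b * n) / ((m : ℝ) + n)) ^ t := by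
  have h := coeff_one_add_C_mul_X_pow_mul_pow_le ha.le hb.le m n t
  rw [coeff_mul, Finset.Nat.sum_antidiagonal_eq_sum_range_succ_mk] at h
  simp only [coeff_one_add_C_mul_X_pow] at h
  exact (Finset.sum_congr rfl fun x _ ↦ by ring).trans_le h

/-- Lemma `coef` of the paper: for `a, b > 0` and `m, n ≥ 1`, each coefficient of
`(1 + a·z)^m (1 + b·z)^n` is dominated by the corresponding coefficient of
`(1 + ((a·m + b·n)/(m + n))·z)^{m+n}`. -/
theorem coeff_prod_le_coeff_avg (a b : ℝ) (ha : 0 < a) (hb : 0 < b)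
    (m n : ℕ) (hm : 1 ≤ m) (hn : 1 ≤ n) (t : ℕ) (ht : t ≤ m + n) :
    ∑ x ∈ Finset.range (t + 1),
        (m.choose x : ℝ) * (n.choose (t - x) : ℝ) * a ^ x * b ^ (t - x)
      ≤ ((m + n).choose t : ℝ) * ((a * m + b * n) / ((m : ℝ) + n)) ^ t :=
  coeff_prod_le_coeff_avg_general a b ha hb m n t
end

section
/- Let a, b > 0 be real numbers, let m ≥ 1 be a natural number, and let t be a natural number with 1 ≤ t ≤ m + 1. Then C(m, t)·a^t + C(m, t−1)·a^{t−1}·b ≤ C(m+1, t)·((m·a + b)/(m + 1))^t. -/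
/-!
Write `c = (m a + b)/(m + 1)`. Pascal's rule and `(m + 1) C(m, t - 1) = t C(m + 1, t)` turn the
left-hand side into `C(m + 1, t) (a^t + t a^(t-1) (c - a))`, and since `c ≥ 0` the bracket is the
tangent line of `x ↦ x^t` at `a`, evaluated at `c`; by Bernoulli's inequality it lies below `c^t`.
-/

section

variable {K : Type*} [Field K]

theorem pow_add_mul_pow_mul_sub_le_pow [LinearOrder K] [IsStrictOrderedRing K] {a x : K}
    (ha : 0 < a) (hx : 0 ≤ x) (n : ℕ) :
    a ^ (n + 1) + (n + 1) * a ^ n * (x - a) ≤ x ^ (n + 1) := by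
  have hbernoulli : 1 + ((n + 1 : ℕ) : K) * (x / a - 1) ≤ (1 + (x / a - 1)) ^ (n + 1) :=
    one_add_mul_le_pow (by linarith [div_nonneg hx ha.le]) (n + 1)
  calc a ^ (n + 1) + (n + 1) * a ^ n * (x - a)
      = a ^ (n + 1) * (1 + ((n + 1 : ℕ) : K) * (x / a - 1)) := by
        push_cast; field_simp; ring
    _ ≤ a ^ (n + 1) * (1 + (x / a - 1)) ^ (n + 1) := by gcongr
    _ = x ^ (n + 1) := by
        rw [add_sub_cancel, div_pow, mul_div_cancel₀ _ (pow_ne_zero _ ha.ne')]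

theorem choose_mul_pow_add_choose_mul_pow_mul [CharZero K] (a b : K) (m s : ℕ) :
    (m.choose (s + 1) : K) * a ^ (s + 1) + (m.choose s : K) * a ^ s * b
      = ((m + 1).choose (s + 1) : K) *
          (a ^ (s + 1) + (s + 1) * a ^ s * ((m * a + b) / (m + 1) - a)) := by
  have hpascal : ((m + 1).choose (s + 1) : K) = m.choose s + m.choose (s + 1) := by
    exact_mod_cast Nat.choose_succ_succ' m s
  have habsorb : ((m : K) + 1) * m.choose s = (m + 1).choose (s + 1) * (s + 1) := by
    exact_mod_cast Nat.add_one_mul_choose_eq m s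
  have hm : (m : K) + 1 ≠ 0 := by exact_mod_cast m.succ_ne_zero
  field_simp
  linear_combination (a ^ s * (b - a)) * habsorb - ((m : K) + 1) * a ^ (s + 1) * hpascal

end

theorem coeff_base_case_general (a b : ℝ) (ha : 0 < a) (hb : 0 < b)
    (m : ℕ) (t : ℕ) (ht1 : 1 ≤ t) :
    (m.choose t : ℝ) * a ^ t + (m.choose (t - 1) : ℝ) * a ^ (t - 1) * b
      ≤ ((m + 1).choose t : ℝ) * (((m : ℝ) * a + b) / ((m : ℝ) + 1)) ^ t := by
  obtain ⟨s, rfl⟩ : ∃ s, t = s + 1 := ⟨t - 1, by omega⟩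
  rw [Nat.add_sub_cancel, choose_mul_pow_add_choose_mul_pow_mul]
  have hc : 0 ≤ ((m : ℝ) * a + b) / ((m : ℝ) + 1) := by positivity
  gcongr
  exact pow_add_mul_pow_mul_sub_le_pow ha hc s

/-- Base case (n = 1) of the paper's polynomial-coefficient lemma: the coefficient of
`z^t` in `(1 + a·z)^m (1 + b·z)` is dominated by the coefficient of `z^t` in
`(1 + ((m·a + b)/(m+1))·z)^{m+1}`. -/
theorem coeff_base_case (a b : ℝ) (ha : 0 < a) (hb : 0 < b)
    (m : ℕ) (hm : 1 ≤ m) (t : ℕ) (ht1 : 1 ≤ t) (ht2 : t ≤ m + 1) :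
    (m.choose t : ℝ) * a ^ t + (m.choose (t - 1) : ℝ) * a ^ (t - 1) * b
      ≤ ((m + 1).choose t : ℝ) * (((m : ℝ) * a + b) / ((m : ℝ) + 1)) ^ t :=
  coeff_base_case_general a b ha hb m t ht1
end

section
/- Let n ≥ 1, and let t, m be natural numbers with t ≤ n and m ≤ n. Then ∑_{x=0}^{m} 4^x · C(t, x) · C(n−t, m−x) ≤ (1 + 3·t/n)^m · C(n, m), where the sum and the right-hand side are taken in ℝ. Equivalently, if X is the hypergeometric random variable counting how many of t uniformly-placed erasures fall inside a fixed region of m out of n qubits, then E[2^{2X}] ≤ (1 + 3t/n)^m. -/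
/-!
Writing `4 = 3 + 1` and expanding `4 ^ x` binomially turns the sum into
`∑ⱼ 3 ^ j C(t, j) C(n - j, m - j)`: choosing `j` of the `x` marked positions first, the inner sum
over `x` collapses by Vandermonde's identity. Then `C(t, j) ≤ (t / n) ^ j C(n, j)` (compare the
falling factorials factor by factor) and `C(n, j) C(n - j, m - j) = C(n, m) C(m, j)` bound the
`j`-th term by `(3t / n) ^ j C(m, j) C(n, m)`, which the binomial theorem sums to
`(1 + 3t / n) ^ m C(n, m)`.
-/

open Finset

namespace Nat

theorem pow_mul_descFactorial_le_pow_mul_descFactorial {n t : ℕ} (ht : t ≤ n) (j : ℕ) :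
    n ^ j * t.descFactorial j ≤ t ^ j * n.descFactorial j := by
  rw [descFactorial_eq_prod_range, descFactorial_eq_prod_range, pow_eq_prod_const,
    pow_eq_prod_const, ← prod_mul_distrib, ← prod_mul_distrib]
  refine prod_le_prod' fun i _ => ?_
  rw [Nat.mul_sub, Nat.mul_sub, Nat.mul_comm n t]
  exact Nat.sub_le_sub_left (Nat.mul_le_mul_right i ht) _

theorem pow_mul_choose_le_pow_mul_choose {n t : ℕ} (ht : t ≤ n) (j : ℕ) :
    n ^ j * t.choose j ≤ t ^ j * n.choose j := by
  have h := pow_mul_descFactorial_le_pow_mul_descFactorial ht j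
  rw [descFactorial_eq_factorial_mul_choose, descFactorial_eq_factorial_mul_choose,
    Nat.mul_left_comm, Nat.mul_left_comm (t ^ j)] at h
  exact Nat.le_of_mul_le_mul_left h (factorial_pos j)

theorem sum_Ico_choose_mul_choose_mul_choose {n t m j : ℕ} (ht : t ≤ n) (hj : j ≤ m) :
    ∑ x ∈ Ico j (m + 1), t.choose x * x.choose j * (n - t).choose (m - x) =
      t.choose j * (n - j).choose (m - j) := by
  calc ∑ x ∈ Ico j (m + 1), t.choose x * x.choose j * (n - t).choose (m - x)
      = t.choose j *
          ∑ y ∈ range (m - j + 1), (t - j).choose y * (n - t).choose (m - j - y) := by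
        rw [sum_Ico_eq_sum_range, show m + 1 - j = m - j + 1 by omega, mul_sum]
        refine sum_congr rfl fun y _ => ?_
        rw [choose_mul (le_add_right j y), add_tsub_cancel_left,
          show m - (j + y) = m - j - y by omega, Nat.mul_assoc]
    _ = t.choose j * (t - j + (n - t)).choose (m - j) := by
        rw [add_choose_eq, Nat.sum_antidiagonal_eq_sum_range_succ_mk]
    _ = t.choose j * (n - j).choose (m - j) := by
        rcases le_or_gt j t with hjt | hjt
        · rw [show t - j + (n - t) = n - j by omega]
        · rw [choose_eq_zero_of_lt hjt, Nat.zero_mul, Nat.zero_mul]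

end Nat

theorem sum_add_one_pow_mul_choose_mul_choose {R : Type*} [CommSemiring R] (a : R) {n t : ℕ}
    (ht : t ≤ n) (m : ℕ) :
    ∑ x ∈ range (m + 1), (a + 1) ^ x * t.choose x * (n - t).choose (m - x) =
      ∑ j ∈ range (m + 1), a ^ j * t.choose j * (n - j).choose (m - j) := by
  calc ∑ x ∈ range (m + 1), (a + 1) ^ x * t.choose x * (n - t).choose (m - x)
      = ∑ x ∈ range (m + 1), ∑ j ∈ range (x + 1),
          a ^ j * ((t.choose x * x.choose j * (n - t).choose (m - x) : ℕ) : R) := by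
        refine sum_congr rfl fun x _ => ?_
        simp only [add_pow, one_pow, mul_one, sum_mul]
        refine sum_congr rfl fun j _ => ?_
        push_cast; ring
    _ = ∑ j ∈ range (m + 1), ∑ x ∈ Ico j (m + 1),
          a ^ j * ((t.choose x * x.choose j * (n - t).choose (m - x) : ℕ) : R) :=
        sum_comm' fun x j => by simp only [mem_range, mem_Ico]; omega
    _ = ∑ j ∈ range (m + 1), a ^ j * t.choose j * (n - j).choose (m - j) := by
        refine sum_congr rfl fun j hj => ?_
        rw [← mul_sum, ← Nat.cast_sum,
          Nat.sum_Ico_choose_mul_choose_mul_choose ht (mem_range_succ_iff.mp hj)]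
        push_cast; ring

theorem choose_le_div_pow_mul_choose {n t : ℕ} (ht : t ≤ n) (j : ℕ) :
    (t.choose j : ℝ) ≤ ((t : ℝ) / n) ^ j * n.choose j := by
  rcases (Nat.zero_le n).eq_or_lt with rfl | hn
  · obtain rfl : t = 0 := Nat.le_zero.mp ht
    cases j <;> simp
  · rw [div_pow, div_mul_eq_mul_div, le_div_iff₀ (by positivity), mul_comm]
    exact_mod_cast Nat.pow_mul_choose_le_pow_mul_choose ht j

theorem hypergeometric_mgf_bound_general (n t m : ℕ) (ht : t ≤ n) :
    ∑ x ∈ Finset.range (m + 1),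
        (4 : ℝ) ^ x * (t.choose x : ℝ) * ((n - t).choose (m - x) : ℝ)
      ≤ (1 + 3 * (t : ℝ) / (n : ℝ)) ^ m * (n.choose m : ℝ) := by
  calc ∑ x ∈ range (m + 1), (4 : ℝ) ^ x * t.choose x * (n - t).choose (m - x)
      = ∑ j ∈ range (m + 1), (3 : ℝ) ^ j * t.choose j * (n - j).choose (m - j) := by
        rw [← sum_add_one_pow_mul_choose_mul_choose _ ht]; norm_num
    _ ≤ ∑ j ∈ range (m + 1),
          (3 : ℝ) ^ j * (((t : ℝ) / n) ^ j * n.choose j) * (n - j).choose (m - j) := by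
        gcongr with j
        exact choose_le_div_pow_mul_choose ht j
    _ = ∑ j ∈ range (m + 1), (3 * (t : ℝ) / n) ^ j * m.choose j * n.choose m := by
        refine sum_congr rfl fun j hj => ?_
        have hjm : j ≤ m := mem_range_succ_iff.mp hj
        have hchoose : (n.choose j : ℝ) * (n - j).choose (m - j) = n.choose m * m.choose j := by
          exact_mod_cast (Nat.choose_mul hjm).symm
        rw [mul_div_assoc, mul_pow]
        linear_combination (3 ^ j * ((t : ℝ) / n) ^ j) * hchoose
    _ = (1 + 3 * (t : ℝ) / n) ^ m * n.choose m := by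
        rw [add_comm (1 : ℝ), add_pow, sum_mul]; simp only [one_pow, mul_one]

/-- Hypergeometric moment bound: if `X` counts how many of `t` uniformly placed erasures
fall inside a fixed region of `m` of the `n` qubits, then `E[2^{2X}] ≤ (1 + 3t/n)^m`,
i.e. `∑_{x=0}^m 4^x C(t,x) C(n−t, m−x) ≤ (1 + 3t/n)^m C(n,m)`. -/
theorem hypergeometric_mgf_bound (n t m : ℕ) (hn : 1 ≤ n) (ht : t ≤ n) (hm : m ≤ n) :
    ∑ x ∈ Finset.range (m + 1),
        (4 : ℝ) ^ x * (t.choose x : ℝ) * ((n - t).choose (m - x) : ℝ)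
      ≤ (1 + 3 * (t : ℝ) / (n : ℝ)) ^ m * (n.choose m : ℝ) :=
  hypergeometric_mgf_bound_general n t m ht
end

section
/- Let ι and σ be finite types, let k be the cardinality of ι, and let M ≥ 1 be a natural number. Suppose f : ι → Finset σ satisfies: (i) for every i, the cardinality of f i is at most M, and (ii) for every s : σ, the number of indices i with s ∈ f i is at most M. Then there exists a finite set J ⊆ ι such that the sets f i for i ∈ J are pairwise disjoint (for distinct i, j ∈ J, f i and f j are disjoint) and k ≤ M² · |J| (equivalently |J| ≥ ⌈k/M²⌉). -/
open Finset

lemma disjoint_light_cones_aux {ι σ : Type*} [Fintype ι] [Fintype σ]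
    [DecidableEq ι] [DecidableEq σ]
    (M : ℕ) (hM : 1 ≤ M) (f : ι → Finset σ)
    (hfwd : ∀ i, (f i).card ≤ M)
    (hbwd : ∀ s : σ, (Finset.univ.filter fun i => s ∈ f i).card ≤ M) :
    ∀ S : Finset ι, ∃ J : Finset ι, J ⊆ S ∧
      (∀ i ∈ J, ∀ j ∈ J, i ≠ j → Disjoint (f i) (f j)) ∧
      S.card ≤ M ^ 2 * J.card := by
  intro S
  induction S using Finset.strongInduction with
  | _ S ih =>
    rcases S.eq_empty_or_nonempty with rfl | ⟨i, hi⟩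
    · exact ⟨∅, Subset.refl _, by simp, by simp⟩
    · set B : Finset ι := insert i (S.filter (fun j => ¬ Disjoint (f i) (f j))) with hB
      have hiB : i ∈ B := mem_insert_self _ _
      have hBcard : B.card ≤ M ^ 2 := by
        rcases (f i).eq_empty_or_nonempty with hfe | hfn
        · have : B = {i} := by
            rw [hB]
            ext j
            simp [hfe]
          rw [this]
          simpa using Nat.one_le_pow 2 M hM
        · have hBeq : B = S.filter (fun j => ¬ Disjoint (f i) (f j)) := by
            rw [hB, insert_eq_self]
            exact mem_filter.mpr ⟨hi, fun hd => hfn.ne_empty (disjoint_self.mp hd)⟩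
          have hsub : B ⊆ (f i).biUnion (fun s => Finset.univ.filter fun j => s ∈ f j) := by
            rw [hBeq]
            intro j hj
            obtain ⟨-, hnd⟩ := mem_filter.mp hj
            rw [Finset.not_disjoint_iff] at hnd
            obtain ⟨s, hs1, hs2⟩ := hnd
            exact mem_biUnion.mpr ⟨s, hs1, mem_filter.mpr ⟨mem_univ _, hs2⟩⟩
          calc B.card ≤ ((f i).biUnion _).card := card_le_card hsub
            _ ≤ ∑ s ∈ f i, (Finset.univ.filter fun j => s ∈ f j).card :=
                card_biUnion_le
            _ ≤ ∑ _s ∈ f i, M := Finset.sum_le_sum fun s _ => hbwd s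
            _ = (f i).card * M := by rw [Finset.sum_const, smul_eq_mul]
            _ ≤ M * M := Nat.mul_le_mul_right M (hfwd i)
            _ = M ^ 2 := (sq M).symm
      obtain ⟨J', hJ'sub, hJ'disj, hJ'card⟩ := ih (S \ B)
        (ssubset_of_subset_of_ne (sdiff_subset)
          (fun h => (mem_sdiff.mp (show i ∈ S \ B by rw [h]; exact hi)).2 hiB))
      have hiJ' : i ∉ J' := fun h => (mem_sdiff.mp (hJ'sub h)).2 hiB
      have hdisjJ' : ∀ j ∈ J', Disjoint (f i) (f j) := by
        intro j hj
        have hjSB := mem_sdiff.mp (hJ'sub hj)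
        by_contra hnd
        exact hjSB.2 (mem_insert_of_mem (mem_filter.mpr ⟨hjSB.1, hnd⟩))
      refine ⟨insert i J', ?_, ?_, ?_⟩
      · intro j hj
        rcases mem_insert.mp hj with rfl | hj'
        · exact hi
        · exact (mem_sdiff.mp (hJ'sub hj')).1
      · intro a ha b hb hab
        rcases mem_insert.mp ha with rfl | ha' <;> rcases mem_insert.mp hb with rfl | hb'
        · exact absurd rfl hab
        · exact hdisjJ' b hb'
        · exact (hdisjJ' a ha').symm
        · exact hJ'disj a ha' b hb' hab
      · rw [card_insert_of_notMem hiJ', Nat.mul_add, Nat.mul_one]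
        calc S.card ≤ (S \ B).card + B.card := by
              rw [card_sdiff_add_card]; exact card_le_card subset_union_left
          _ ≤ M ^ 2 * J'.card + M ^ 2 := Nat.add_le_add hJ'card hBcard

/-- Disjoint light cones lemma: if every forward light cone `f i` has at most `M` elements
and every physical qubit `s` lies in at most `M` forward light cones (backward light
cones have size at most `M`), then there is a subset `J` of logical qubits with pairwise
disjoint light cones and `|J| ≥ ⌈k/M²⌉`, i.e. `k ≤ M² · |J|`. -/
theorem disjoint_light_cones {ι σ : Type*} [Fintype ι] [Fintype σ]
    [DecidableEq ι] [DecidableEq σ]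
    (M : ℕ) (hM : 1 ≤ M) (f : ι → Finset σ)
    (hfwd : ∀ i, (f i).card ≤ M)
    (hbwd : ∀ s : σ, (Finset.univ.filter fun i => s ∈ f i).card ≤ M) :
    ∃ J : Finset ι,
      (∀ i ∈ J, ∀ j ∈ J, i ≠ j → Disjoint (f i) (f j)) ∧
      Fintype.card ι ≤ M ^ 2 * J.card := by
  obtain ⟨J, -, hdisj, hcard⟩ :=
    disjoint_light_cones_aux M hM f hfwd hbwd Finset.univ
  exact ⟨J, hdisj, by simpa [Finset.card_univ] using hcard⟩
end
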